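/- arXiv:2404.08646 — 2 statements merged into one kernel-verified Lean document; each statement's English description precedes it below -/
import Mathlib

section
/- For every integer n > 1, n divides 2·A_{n-1} + 4 if and only if n is a prime number, where A_m = ∏_{j=1}^{m-1} j(j+1)/2. -/
/-- `A m = ∏_{j=1}^{m-1} j(j+1)/2`, the product of the first `m-1` triangular numbers. -/
def A (m : ℕ) : ℕ := ∏ j ∈ Finset.Icc 1 (m - 1), j * (j + 1) / 2

lemma two_mul_T (j : ℕ) : 2 * (j * (j + 1) / 2) = j * (j + 1) :=
  Nat.mul_div_cancel' (Nat.even_mul_succ_self j).two_dvd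

lemma key (m : ℕ) : 2 ^ m * A (m + 1) = m.factorial * (m + 1).factorial := by
  induction m with
  | zero => simp [A]
  | succ k ih =>
      have h1 : A (k + 2) = A (k + 1) * (((k+1) * (k + 2)) / 2) := by
        show (∏ j ∈ Finset.Icc 1 (k+1), j * (j + 1) / 2) = _
        rw [Finset.prod_Icc_succ_top (by omega : 1 ≤ k + 1)]
        rfl
      rw [h1]
      have h2 : 2 ^ (k+1) * (A (k+1) * ((k+1) * (k+2) / 2)) =
          (2 ^ k * A (k+1)) * (2 * ((k+1) * ((k+1) + 1) / 2)) := by ring_nf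
      rw [h2, two_mul_T, ih, Nat.factorial_succ (k+1), Nat.factorial_succ k]
      ring

lemma prime_dir (p : ℕ) (hp : p.Prime) : p ∣ 2 * A (p - 1) + 4 := by
  by_cases hp2 : p = 2
  · subst hp2; decide
  · haveI : Fact p.Prime := ⟨hp⟩
    have hp3 : 3 ≤ p := by
      have := hp.two_le; omega
    have h1 : 2 ^ (p - 2) * A (p - 1) = (p - 2).factorial * (p - 1).factorial := by
      have := key (p - 2)
      rwa [show p - 2 + 1 = p - 1 by omega] at this
    have hcast : (2 : ZMod p) ^ (p - 2) * (A (p - 1) : ZMod p)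
        = ((p - 2).factorial : ZMod p) * ((p - 1).factorial : ZMod p) := by
      exact_mod_cast congrArg (Nat.cast : ℕ → ZMod p) h1
    have hw : (((p - 1).factorial : ℕ) : ZMod p) = -1 := ZMod.wilsons_lemma p
    have hpm1 : (((p - 1 : ℕ)) : ZMod p) = -1 := by
      push_cast [Nat.cast_sub hp.one_le]
      simp [ZMod.natCast_self]
    have hf2 : (((p - 2).factorial : ℕ) : ZMod p) = 1 := by
      have hfs : (p - 1).factorial = (p - 1) * (p - 2).factorial := by
        rw [show p - 1 = (p - 2) + 1 by omega, Nat.factorial_succ]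
      rw [hfs] at hw
      push_cast at hw
      rw [hpm1] at hw
      rw [neg_one_mul] at hw
      exact neg_inj.mp hw
    rw [hf2, hw, one_mul] at hcast
    have h2ne : (2 : ZMod p) ≠ 0 := by
      have h2 : ((2 : ℕ) : ZMod p) ≠ 0 := by
        rw [Ne, ZMod.natCast_eq_zero_iff]
        intro h
        exact hp2 ((Nat.prime_dvd_prime_iff_eq hp Nat.prime_two).mp h)
      simpa using h2
    have fermat : (2 : ZMod p) ^ (p - 1) = 1 := ZMod.pow_card_sub_one_eq_one h2ne
    have hA : (A (p - 1) : ZMod p) = -2 := by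
      have h3 : (2 : ZMod p) * ((2 : ZMod p) ^ (p - 2) * (A (p - 1) : ZMod p)) = 2 * -1 := by
        rw [hcast]
      rw [← mul_assoc, ← pow_succ', show p - 2 + 1 = p - 1 by omega, fermat, one_mul] at h3
      linear_combination h3
    have hz : ((2 * A (p - 1) + 4 : ℕ) : ZMod p) = 0 := by
      push_cast
      rw [hA]
      ring
    exact (ZMod.natCast_eq_zero_iff _ _).mp hz

lemma odd_dvd_T (a : ℕ) (h : Odd a) : a ∣ a * (a + 1) / 2 := by
  obtain ⟨c, rfl⟩ := h
  exact ⟨c + 1, by rw [show (2*c+1) * (2*c+1+1) = ((2*c+1) * (c+1)) * 2 by ring,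
    Nat.mul_div_cancel _ two_pos]⟩

lemma odd_dvd_T_pred (a : ℕ) (h : Odd a) : a ∣ (a - 1) * ((a - 1) + 1) / 2 := by
  obtain ⟨c, rfl⟩ := h
  refine ⟨c, ?_⟩
  rw [show 2 * c + 1 - 1 = 2 * c by omega,
    show (2*c) * (2*c+1) = ((2*c+1) * c) * 2 by ring,
    Nat.mul_div_cancel _ two_pos]

lemma pow2_T (k : ℕ) (hk : 1 ≤ k) : 2 ^ k * (2 ^ k + 1) / 2 = 2 ^ (k - 1) * (2 ^ k + 1) := by
  rw [show 2 ^ k = 2 ^ (k-1) * 2 by rw [← pow_succ]; congr 1; omega]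
  rw [show 2 ^ (k-1) * 2 * (2 ^ (k-1) * 2 + 1) = (2 ^ (k-1) * (2 ^ (k-1) * 2 + 1)) * 2 by ring,
    Nat.mul_div_cancel _ two_pos]

lemma pair_dvd_A (m i j : ℕ) (hij : i ≠ j) (hi : i ∈ Finset.Icc 1 (m - 1))
    (hj : j ∈ Finset.Icc 1 (m - 1)) :
    (i * (i + 1) / 2) * (j * (j + 1) / 2) ∣ A m := by
  have hsub : ({i, j} : Finset ℕ) ⊆ Finset.Icc 1 (m - 1) := by
    intro x hx
    rcases Finset.mem_insert.mp hx with rfl | hx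
    · exact hi
    · rw [Finset.mem_singleton.mp hx]; exact hj
  have := Finset.prod_dvd_prod_of_subset _ _ (fun j => j * (j + 1) / 2) hsub
  rwa [Finset.prod_pair hij] at this

lemma comp_dvd (n : ℕ) (h4 : 4 < n) (hnp : ¬ n.Prime) : n ∣ 2 * A (n - 1) := by
  obtain ⟨i, j, hij, hi, hj, hdvd⟩ :
      ∃ i j : ℕ, i ≠ j ∧ i ∈ Finset.Icc 1 (n - 1 - 1) ∧ j ∈ Finset.Icc 1 (n - 1 - 1) ∧
        n ∣ 2 * ((i * (i + 1) / 2) * (j * (j + 1) / 2)) := by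
    rcases Nat.even_or_odd n with he | ho
    · -- even case
      have hn0 : n ≠ 0 := by omega
      obtain ⟨k, m, hk1, hmd, hmk⟩ : ∃ k m : ℕ, 1 ≤ k ∧ ¬ 2 ∣ m ∧ 2 ^ k * m = n :=
        ⟨n.factorization 2, n / 2 ^ (n.factorization 2),
          Nat.Prime.factorization_pos_of_dvd Nat.prime_two hn0 he.two_dvd,
          Nat.not_dvd_ordCompl Nat.prime_two hn0,
          Nat.ordProj_mul_ordCompl_eq_self n 2⟩
      have hmodd : Odd m := Nat.odd_iff.mpr (by omega)
      have h2k : 2 ≤ 2 ^ k := by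
        calc 2 = 2 ^ 1 := by norm_num
        _ ≤ 2 ^ k := Nat.pow_le_pow_right (by norm_num) hk1
      have hm13 : m = 1 ∨ 3 ≤ m := by
        have hm2 : m % 2 = 1 := Nat.odd_iff.mp hmodd
        omega
      rcases hm13 with hm1 | hm3
      · -- n = 2^k
        have hn2k : n = 2 ^ k := by rw [← hmk, hm1, mul_one]
        have hk3 : 3 ≤ k := by
          by_contra hh
          have : 2 ^ k ≤ 2 ^ 2 := Nat.pow_le_pow_right (by norm_num) (by omega)
          omega
        have h4k : 4 ≤ 2 ^ (k - 1) := by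
          calc (4:ℕ) = 2 ^ 2 := by norm_num
          _ ≤ 2 ^ (k - 1) := Nat.pow_le_pow_right (by norm_num) (by omega)
        have h2k1 : 2 ^ k = 2 * 2 ^ (k - 1) := by
          rw [← pow_succ']; congr 1; omega
        refine ⟨3, 2 ^ (k - 1), by omega, by rw [Finset.mem_Icc]; omega,
          by rw [Finset.mem_Icc]; omega, ?_⟩
        rw [pow2_T (k - 1) (by omega), show k - 1 - 1 = k - 2 by omega]
        have e : 2 ^ k = 4 * 2 ^ (k - 2) := by
          have e2 : (2:ℕ) ^ k = 2 ^ (2 + (k - 2)) := by congr 1; omega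
          rw [e2, pow_add]; norm_num
        have t3 : 3 * (3 + 1) / 2 = 6 := rfl
        have : 2 * ((3 * (3 + 1) / 2) * (2 ^ (k - 2) * (2 ^ (k - 1) + 1)))
            = 2 ^ k * (3 * (2 ^ (k - 1) + 1)) := by
          rw [t3, e]; ring
        rw [this, hn2k]
        exact Dvd.intro _ rfl
      · -- m ≥ 3
        have hne : (2 : ℕ) ^ k ≠ m := by
          intro h; rw [← h] at hmd; exact hmd (dvd_pow_self 2 (by omega))
        have hb1 : 2 ^ k * 3 ≤ 2 ^ k * m := Nat.mul_le_mul_left _ hm3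
        have hb2 : 2 * m ≤ 2 ^ k * m := Nat.mul_le_mul_right _ h2k
        refine ⟨2 ^ k, m, hne, by rw [Finset.mem_Icc]; omega,
          by rw [Finset.mem_Icc]; omega, ?_⟩
        rw [pow2_T k hk1]
        have h2k1 : 2 ^ k = 2 * 2 ^ (k - 1) := by
          rw [← pow_succ']; congr 1; omega
        have e : 2 * ((2 ^ (k - 1) * (2 ^ k + 1)) * (m * (m + 1) / 2))
            = 2 ^ k * ((2 ^ k + 1) * (m * (m + 1) / 2)) := by
          rw [h2k1]; ring
        rw [e, ← hmk]
        exact Nat.mul_dvd_mul_left _ ((odd_dvd_T m hmodd).mul_left _)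
    · -- odd case
      set p := n.minFac with hpdef
      have hp : p.Prime := Nat.minFac_prime (by omega)
      have hpd : p ∣ n := Nat.minFac_dvd n
      set b := n / p with hbdef
      have hpb : p * b = n := Nat.mul_div_cancel' hpd
      have hp2 : p ≠ 2 := by
        rintro h
        rw [h] at hpd
        exact (Nat.not_even_iff_odd.mpr ho) ((even_iff_two_dvd).mpr hpd)
      have hpodd : Odd p := hp.odd_of_ne_two hp2
      have hp3 : 3 ≤ p := by have := hp.two_le; omega
      have hbodd : Odd b := by
        rcases Nat.even_or_odd b with hb2 | h
        · exact absurd (hpb ▸ hb2.mul_left p) (Nat.not_even_iff_odd.mpr ho)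
        · exact h
      have hb2 : 2 ≤ b := by
        rcases Nat.lt_or_ge b 2 with hlt | hge
        · interval_cases b
          · omega
          · exfalso; apply hnp; rw [← hpb]; simpa using hp
        · exact hge
      have hpleb : p ≤ b :=
        Nat.minFac_le_of_dvd hb2 ⟨p, by rw [mul_comm]; exact hpb.symm⟩
      have hb3b : 3 * b ≤ p * b := Nat.mul_le_mul_right _ hp3
      rcases eq_or_lt_of_le hpleb with heq | hlt
      · -- n = p * p
        refine ⟨p - 1, p, by omega, by rw [Finset.mem_Icc]; omega,
          by rw [Finset.mem_Icc]; omega, ?_⟩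
        have hd : p * p ∣ ((p - 1) * ((p - 1) + 1) / 2) * (p * (p + 1) / 2) :=
          mul_dvd_mul (odd_dvd_T_pred p hpodd) (odd_dvd_T p hpodd)
        rw [← hpb, ← heq]
        exact hd.mul_left 2
      · -- p < b
        refine ⟨p, b, by omega, by rw [Finset.mem_Icc]; omega,
          by rw [Finset.mem_Icc]; omega, ?_⟩
        have hd : p * b ∣ (p * (p + 1) / 2) * (b * (b + 1) / 2) :=
          mul_dvd_mul (odd_dvd_T p hpodd) (odd_dvd_T b hbodd)
        rw [← hpb]
        exact hd.mul_left 2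
  exact hdvd.trans (mul_dvd_mul_left 2 (pair_dvd_A (n - 1) i j hij hi hj))

/-- For every integer `n > 1`, `n` divides `2·A_{n-1} + 4` iff `n` is prime. -/
theorem schulte_conjecture (n : ℕ) (hn : 1 < n) :
    n ∣ 2 * A (n - 1) + 4 ↔ n.Prime := by
  constructor
  · intro h
    by_contra hnp
    rcases Nat.lt_or_ge n 5 with h5 | h5
    · interval_cases n
      · exact hnp Nat.prime_two
      · exact hnp Nat.prime_three
      · revert h; decide
    · have hd := comp_dvd n (by omega) hnp
      have hd4 : n ∣ 4 := (Nat.dvd_add_right hd).mp h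
      have := Nat.le_of_dvd (by norm_num) hd4
      omega
  · exact prime_dir n
end

section
/- If n > 4 is an even composite integer, then n divides 2·A_{n-1}, where A_m = ∏_{j=1}^{m-1} j(j+1)/2; consequently 2·A_{n-1} + 4 ≡ 4 (mod n) and n does not divide 2·A_{n-1} + 4. -/
/-- If `n > 4` is an even composite integer, then `n ∣ 2·A_{n-1}`; consequently
`2·A_{n-1} + 4 ≡ 4 (mod n)` and `n` does not divide `2·A_{n-1} + 4`. -/
theorem even_composite_dvd (n : ℕ) (hn : 4 < n) (heven : Even n)
    (hcomp : 1 < n ∧ ¬ n.Prime) :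
    n ∣ 2 * A (n - 1) ∧ 2 * A (n - 1) + 4 ≡ 4 [MOD n] ∧
      ¬ n ∣ 2 * A (n - 1) + 4 := by
  obtain ⟨k, hk⟩ := heven
  have hk3 : 3 ≤ k := by omega
  have hdvd : n ∣ 2 * A (n - 1) := by
    have hkA : k ∣ A (n - 1) := by
      unfold A
      rcases Nat.even_or_odd k with ⟨m, hm⟩ | ⟨t, ht⟩
      · -- k even, k = m + m
        have hsub : ({3, k} : Finset ℕ) ⊆ Finset.Icc 1 (n - 1 - 1) := by
          intro x hx
          simp only [Finset.mem_insert, Finset.mem_singleton] at hx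
          rcases hx with rfl | rfl <;> simp only [Finset.mem_Icc] <;> omega
        have hne : (3 : ℕ) ≠ k := by omega
        have hprod : ∏ j ∈ ({3, k} : Finset ℕ), j * (j + 1) / 2
            = 6 * (k * (k + 1) / 2) := by
          rw [Finset.prod_pair hne]
        have hdvd2 : k ∣ ∏ j ∈ ({3, k} : Finset ℕ), j * (j + 1) / 2 := by
          rw [hprod]
          have h1 : k * (k + 1) = 2 * (m * (k + 1)) := by subst hm; ring
          have h2 : k * (k + 1) / 2 = m * (k + 1) := by omega
          rw [h2]
          exact ⟨3 * (k + 1), by subst hm; ring⟩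
        exact hdvd2.trans (Finset.prod_dvd_prod_of_subset _ _ _ hsub)
      · -- k odd, k = 2t+1
        have hmem : k ∈ Finset.Icc 1 (n - 1 - 1) := by
          simp only [Finset.mem_Icc]; omega
        have h1 : k * (k + 1) = 2 * (k * (t + 1)) := by subst ht; ring
        have h2 : k * (k + 1) / 2 = k * (t + 1) := by omega
        have : k ∣ k * (k + 1) / 2 := by rw [h2]; exact ⟨t + 1, rfl⟩
        exact this.trans (Finset.dvd_prod_of_mem _ hmem)
    obtain ⟨c, hc⟩ := hkA
    exact ⟨c, by rw [hc, hk]; ring⟩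
  refine ⟨hdvd, ?_, ?_⟩
  · have := (Nat.modEq_zero_iff_dvd.mpr hdvd).add_right 4
    simpa using this
  · intro h
    have h4 : n ∣ 4 := by
      have := Nat.dvd_sub h hdvd
      simpa using this
    have := Nat.le_of_dvd (by norm_num) h4
    omega
end
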